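/- Fix a constant q ∈ (0, 1) and a probability measure ν on (S, B), and define the exponential smoothing strategy σ by σ_0 = ν and σ_n(x) = q^n ν + (1 − q) Σ_{i=1}^n q^{n−i} δ_{x_i} for all n ≥ 1 and x ∈ S^n. Then the coordinate process X is conditionally identically distributed (c.i.d.) under P_σ. -/

import Mathlib

open MeasureTheory ProbabilityTheory
open scoped ENNReal

namespace PredictiveBayes

variable {S : Type*} [MeasurableSpace S]

/-- The finite-dimensional distributions determined by a strategy `κ`. -/
noncomputable def stratFDD (κ : ∀ n, Kernel (Fin n → S) S) : ∀ n, Measure (Fin n → S)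
  | 0 => Measure.dirac (fun i : Fin 0 => i.elim0)
  | n + 1 => (stratFDD κ n).bind (fun x => ((κ n) x).map (Fin.snoc x))

/-- `P` is the Ionescu–Tulcea law `P_κ` of the strategy `κ`. -/
def IsStrategyLaw (κ : ∀ n, Kernel (Fin n → S) S) (P : Measure (ℕ → S)) : Prop :=
  ∀ n, P.map (fun ω (i : Fin n) => ω i) = stratFDD κ n

/-- The process `Y` is conditionally identically distributed (c.i.d.) under `P`. -/
def CID {Ω : Type*} [MeasurableSpace Ω] (P : Measure Ω) (Y : ℕ → Ω → S) : Prop :=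
  P.map (Y 1) = P.map (Y 0) ∧
  ∀ n m : ℕ, 1 ≤ n → n ≤ m → ∀ A : Set S, MeasurableSet A →
    (P[Set.indicator ((Y m) ⁻¹' A) (fun _ => (1 : ℝ)) |
        MeasurableSpace.comap (fun ω (i : Fin n) => Y i ω) inferInstance])
      =ᵐ[P]
    (P[Set.indicator ((Y n) ⁻¹' A) (fun _ => (1 : ℝ)) |
        MeasurableSpace.comap (fun ω (i : Fin n) => Y i ω) inferInstance])

/-!
Exponential smoothing satisfies the recursion `σ_{n+1}(x, y) = q σ_n(x) + (1 - q) δ_y`, hence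
`∫ σ_{n+1}(x, y)(A) σ_n(x)(dy) = σ_n(x)(A)`: the predictive probabilities
`σ_n(X_1, …, X_n)(A)` form a martingale. Integrating this identity against the law of
`(X_1, …, X_{n+k})` shows, by induction on `k`, that
`P(X_{n+k+1} ∈ A, (X_1, …, X_n) ∈ B) = E[σ_n(X_1, …, X_n)(A); (X_1, …, X_n) ∈ B]`, so every
`P(X_m ∈ A | X_1, …, X_n)` with `m > n` equals `σ_n(X_1, …, X_n)(A)`.
-/

lemma measurable_snoc (n : ℕ) :
    Measurable (fun p : (Fin n → S) × S => (Fin.snoc p.1 p.2 : Fin (n + 1) → S)) := by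
  refine measurable_pi_iff.mpr fun i => ?_
  cases i using Fin.lastCases <;> simp only [Fin.snoc_last, Fin.snoc_castSucc] <;> fun_prop

lemma measurable_snoc_right {n : ℕ} (x : Fin n → S) :
    Measurable (fun y : S => (Fin.snoc x y : Fin (n + 1) → S)) :=
  (measurable_snoc n).comp measurable_prodMk_left

lemma measurable_map_snoc {n : ℕ} (η : Kernel (Fin n → S) S) [IsSFiniteKernel η] :
    Measurable (fun x => (η x).map (Fin.snoc x) : (Fin n → S) → Measure (Fin (n + 1) → S)) := by
  refine Measure.measurable_of_measurable_coe _ fun s hs => ?_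
  simp_rw [Measure.map_apply (measurable_snoc_right _) hs]
  exact Kernel.measurable_kernel_prodMk_left (measurable_snoc n hs)

section Strategy

variable {κ : ∀ n, Kernel (Fin n → S) S}

lemma lintegral_stratFDD_succ [∀ n, IsSFiniteKernel (κ n)] (n : ℕ)
    {f : (Fin (n + 1) → S) → ℝ≥0∞} (hf : Measurable f) :
    ∫⁻ y, f y ∂stratFDD κ (n + 1) = ∫⁻ x, ∫⁻ s, f (Fin.snoc x s) ∂κ n x ∂stratFDD κ n := by
  rw [stratFDD, Measure.lintegral_bind (measurable_map_snoc _).aemeasurable hf.aemeasurable]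
  exact lintegral_congr fun x => lintegral_map hf (measurable_snoc_right x)

lemma IsStrategyLaw.isProbabilityMeasure {P : Measure (ℕ → S)} (hP : IsStrategyLaw κ P) :
    IsProbabilityMeasure P := by
  have h := congrArg (· Set.univ) (hP 0)
  simp only [stratFDD, measure_univ] at h
  rwa [Measure.map_apply (by fun_prop) .univ, Set.preimage_univ, ← isProbabilityMeasure_iff] at h

lemma IsStrategyLaw.measure_prefix_inter_eval [∀ n, IsSFiniteKernel (κ n)] {P : Measure (ℕ → S)}
    (hP : IsStrategyLaw κ P) (m : ℕ) {C : Set (Fin m → S)} (hC : MeasurableSet C) {A : Set S}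
    (hA : MeasurableSet A) :
    P ((fun ω (i : Fin m) => ω i) ⁻¹' C ∩ (fun ω => ω m) ⁻¹' A) =
      ∫⁻ x, C.indicator 1 x * κ m x A ∂stratFDD κ m := by
  set E : Set (Fin (m + 1) → S) := Fin.init ⁻¹' C ∩ (· (Fin.last m)) ⁻¹' A
  have hE : MeasurableSet E :=
    (hC.preimage (measurable_pi_lambda _ fun _ => measurable_pi_apply _)).inter
      (hA.preimage (measurable_pi_apply _))
  have hsnoc : ∀ x s, E.indicator (1 : (Fin (m + 1) → S) → ℝ≥0∞) (Fin.snoc x s) =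
      C.indicator 1 x * A.indicator 1 s := by
    intro x s
    by_cases hx : x ∈ C <;> by_cases hs : s ∈ A <;> simp [E, hx, hs]
  calc P ((fun ω (i : Fin m) => ω i) ⁻¹' C ∩ (fun ω => ω m) ⁻¹' A)
      = stratFDD κ (m + 1) E := by
        rw [← hP, Measure.map_apply (by fun_prop) hE]; rfl
    _ = ∫⁻ x, ∫⁻ s, E.indicator 1 (Fin.snoc x s) ∂κ m x ∂stratFDD κ m := by
        rw [← lintegral_indicator_one hE, lintegral_stratFDD_succ m (measurable_one.indicator hE)]
    _ = ∫⁻ x, C.indicator 1 x * κ m x A ∂stratFDD κ m := by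
        simp_rw [hsnoc, lintegral_const_mul _ (measurable_one.indicator hA),
          lintegral_indicator_one hA]

/-- The predictive probabilities `κ n (X_1, …, X_n) A` form a martingale. -/
def IsMartingaleStrategy (κ : ∀ n, Kernel (Fin n → S) S) : Prop :=
  ∀ n (x : Fin n → S) (A : Set S), MeasurableSet A →
    ∫⁻ y, κ (n + 1) (Fin.snoc x y) A ∂κ n x = κ n x A

lemma IsMartingaleStrategy.lintegral_prefix_mul [∀ n, IsSFiniteKernel (κ n)]
    (hκ : IsMartingaleStrategy κ) (n : ℕ) {g : (Fin n → S) → ℝ≥0∞} (hg : Measurable g)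
    {A : Set S} (hA : MeasurableSet A) (k : ℕ) :
    ∫⁻ x, g (fun i => x (Fin.castAdd k i)) * κ (n + k) x A ∂stratFDD κ (n + k) =
      ∫⁻ x, g x * κ n x A ∂stratFDD κ n := by
  induction k with
  | zero => rfl
  | succ k ih =>
    have hcast : ∀ (x : Fin (n + k) → S) s (i : Fin n),
        (Fin.snoc x s : Fin (n + k + 1) → S) (Fin.castAdd (k + 1) i) = x (Fin.castAdd k i) :=
      fun x s i => Fin.snoc_castSucc (α := fun _ => S) s x (Fin.castAdd k i)
    have hmeas : Measurable fun x : Fin (n + k + 1) → S =>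
        g (fun i => x (Fin.castAdd (k + 1) i)) * κ (n + k + 1) x A :=
      (hg.comp (measurable_pi_lambda _ fun _ => measurable_pi_apply _)).mul
        (Kernel.measurable_coe _ hA)
    rw [← ih]
    refine (lintegral_stratFDD_succ (n + k) hmeas).trans (lintegral_congr fun x => ?_)
    simp_rw [hcast]
    have hm : Measurable fun s => κ (n + k + 1) (Fin.snoc x s) A :=
      (Kernel.measurable_coe _ hA).comp (measurable_snoc_right x)
    rw [lintegral_const_mul _ hm, hκ _ x A hA]

lemma IsMartingaleStrategy.measure_prefix_inter_eval [∀ n, IsSFiniteKernel (κ n)]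
    (hκ : IsMartingaleStrategy κ) {P : Measure (ℕ → S)} (hP : IsStrategyLaw κ P) (n : ℕ)
    {B : Set (Fin n → S)} (hB : MeasurableSet B) {A : Set S} (hA : MeasurableSet A) (k : ℕ) :
    P ((fun ω (i : Fin n) => ω i) ⁻¹' B ∩ (fun ω => ω (n + k)) ⁻¹' A) =
      ∫⁻ x, B.indicator 1 x * κ n x A ∂stratFDD κ n := by
  have hprefix : Measurable fun (x : Fin (n + k) → S) (i : Fin n) => x (Fin.castAdd k i) :=
    measurable_pi_lambda _ fun _ => measurable_pi_apply _
  rw [← hκ.lintegral_prefix_mul n (measurable_one.indicator hB) hA k]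
  exact hP.measure_prefix_inter_eval (n + k) (hprefix hB) hA

lemma IsMartingaleStrategy.condExp_indicator_eval [∀ n, IsMarkovKernel (κ n)]
    (hκ : IsMartingaleStrategy κ) {P : Measure (ℕ → S)} (hP : IsStrategyLaw κ P) {n m : ℕ}
    (hnm : n ≤ m) {A : Set S} (hA : MeasurableSet A) :
    (fun ω => (κ n (fun i : Fin n => ω i) A).toReal) =ᵐ[P]
      P[((fun ω => ω m) ⁻¹' A).indicator (fun _ => (1 : ℝ)) |
        MeasurableSpace.comap (fun ω (i : Fin n) => ω i) inferInstance] := by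
  have := hP.isProbabilityMeasure
  obtain ⟨k, rfl⟩ := Nat.exists_eq_add_of_le hnm
  have hprefix : Measurable fun (ω : ℕ → S) (i : Fin n) => ω i :=
    measurable_pi_lambda _ fun _ => measurable_pi_apply _
  have hpred : Measurable fun x => (κ n x A).toReal :=
    (Kernel.measurable_coe _ hA).ennreal_toReal
  have hevent : MeasurableSet ((fun ω : ℕ → S => ω (n + k)) ⁻¹' A) := measurable_pi_apply _ hA
  refine ae_eq_condExp_of_forall_setIntegral_eq hprefix.comap_le
    ((integrable_const 1).indicator hevent) (fun s _ _ => ?_) ?_ ?_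
  · refine (Integrable.of_bound (hpred.comp hprefix).aestronglyMeasurable 1
      (ae_of_all _ fun ω => ?_)).integrableOn
    simpa using ENNReal.toReal_mono ENNReal.one_ne_top prob_le_one
  · rintro _ ⟨B, hB, rfl⟩ -
    rw [setIntegral_indicator hevent, setIntegral_const, smul_eq_mul, mul_one, measureReal_def,
      hκ.measure_prefix_inter_eval hP n hB hA k,
      ← setIntegral_map hB hpred.aestronglyMeasurable hprefix.aemeasurable, hP n,
      integral_toReal (Kernel.measurable_coe _ hA).aemeasurable
        (ae_of_all _ fun _ => measure_lt_top _ _),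
      ← lintegral_indicator hB]
    congr 1
    refine lintegral_congr fun x => ?_
    by_cases hx : x ∈ B <;> simp [hx]
  · exact (hpred.comp (Measurable.of_comap_le le_rfl)).aestronglyMeasurable

theorem IsMartingaleStrategy.cid [∀ n, IsMarkovKernel (κ n)] (hκ : IsMartingaleStrategy κ)
    {P : Measure (ℕ → S)} (hP : IsStrategyLaw κ P) : CID P (fun n ω => ω n) := by
  have hmarginal : ∀ m, P.map (fun ω => ω m) = κ 0 (fun i => i.elim0) := by
    intro m
    ext A hA
    have h := hκ.measure_prefix_inter_eval hP 0 MeasurableSet.univ hA m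
    rw [Set.preimage_univ, Set.univ_inter, zero_add] at h
    rw [Measure.map_apply (measurable_pi_apply m) hA, h, stratFDD, lintegral_dirac]
    simp
  refine ⟨(hmarginal 1).trans (hmarginal 0).symm, fun n m _ hnm A hA => ?_⟩
  exact (hκ.condExp_indicator_eval hP hnm hA).symm.trans (hκ.condExp_indicator_eval hP le_rfl hA)

lemma isMartingaleStrategy_of_snoc [∀ n, IsMarkovKernel (κ n)]
    {a b : ℝ≥0∞} (hab : a + b = 1)
    (h : ∀ n (x : Fin n → S) y, κ (n + 1) (Fin.snoc x y) = a • κ n x + b • Measure.dirac y) :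
    IsMartingaleStrategy κ := by
  intro n x A hA
  simp_rw [h, Measure.add_apply, Measure.smul_apply, smul_eq_mul, Measure.dirac_apply' _ hA]
  rw [lintegral_add_left measurable_const, lintegral_const,
    lintegral_const_mul _ (measurable_one.indicator hA), lintegral_indicator_one hA,
    measure_univ, mul_one, ← add_mul, hab, one_mul]

lemma exponentialSmoothing_snoc {q : ℝ} (hq : 0 ≤ q) (ν : Measure S)
    (hκ : ∀ n (x : Fin n → S),
      κ n x = ENNReal.ofReal (q ^ n) • ν +
        ∑ i : Fin n, ENNReal.ofReal ((1 - q) * q ^ (n - 1 - (i : ℕ))) • Measure.dirac (x i))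
    (n : ℕ) (x : Fin n → S) (y : S) :
    κ (n + 1) (Fin.snoc x y) =
      ENNReal.ofReal q • κ n x + ENNReal.ofReal (1 - q) • Measure.dirac y := by
  have hweight : ∀ i : Fin n,
      (1 - q) * q ^ (n - (i : ℕ)) = q * ((1 - q) * q ^ (n - 1 - (i : ℕ))) := by
    intro i
    rw [show n - (i : ℕ) = n - 1 - i + 1 by omega]
    ring
  rw [hκ, hκ, Fin.sum_univ_castSucc, smul_add, Finset.smul_sum, ← add_assoc]
  simp only [Fin.snoc_castSucc, Fin.snoc_last, Fin.val_castSucc, Fin.val_last, smul_smul, hweight,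
    ← ENNReal.ofReal_mul hq, pow_succ', add_tsub_cancel_right, Nat.sub_self, pow_zero, mul_one]

end Strategy

theorem exponentialSmoothing_cid_general {S : Type*} [MeasurableSpace S]
    (q : ℝ) (hq : q ∈ Set.Ioo (0 : ℝ) 1)
    (ν : Measure S)
    (κ : ∀ n, Kernel (Fin n → S) S) [∀ n, IsMarkovKernel (κ n)]
    (hκ : ∀ n (x : Fin n → S),
      κ n x = ENNReal.ofReal (q ^ n) • ν +
        ∑ i : Fin n, ENNReal.ofReal ((1 - q) * q ^ (n - 1 - (i : ℕ))) • Measure.dirac (x i))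
    (P : Measure (ℕ → S)) (hP : IsStrategyLaw κ P) :
    CID P (fun n ω => ω n) := by
  have hweights : ENNReal.ofReal q + ENNReal.ofReal (1 - q) = 1 := by
    rw [← ENNReal.ofReal_add hq.1.le (sub_nonneg.2 hq.2.le), add_sub_cancel, ENNReal.ofReal_one]
  exact (isMartingaleStrategy_of_snoc hweights (exponentialSmoothing_snoc hq.1.le ν hκ)).cid hP

/-- **Theorem (exponential smoothing is c.i.d.).** Fix `q ∈ (0, 1)` and a probability
measure `ν`, and let `κ` be the strategy
`σ_n(x) = qⁿ ν + (1 - q) ∑_{i=1}^n q^{n-i} δ_{x_i}` (in 0-based indexing the weight of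
`δ_{x_i}` is `(1 - q) q^{n-1-i}`). Then the coordinate process is c.i.d. under `P_κ`. -/
theorem exponentialSmoothing_cid {S : Type*} [MeasurableSpace S] [StandardBorelSpace S]
    [Nonempty S]
    (q : ℝ) (hq : q ∈ Set.Ioo (0 : ℝ) 1)
    (ν : Measure S) [IsProbabilityMeasure ν]
    (κ : ∀ n, Kernel (Fin n → S) S) [∀ n, IsMarkovKernel (κ n)]
    (hκ : ∀ n (x : Fin n → S),
      κ n x = ENNReal.ofReal (q ^ n) • ν +
        ∑ i : Fin n, ENNReal.ofReal ((1 - q) * q ^ (n - 1 - (i : ℕ))) • Measure.dirac (x i))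
    (P : Measure (ℕ → S)) [IsProbabilityMeasure P] (hP : IsStrategyLaw κ P) :
    CID P (fun n ω => ω n) :=
  exponentialSmoothing_cid_general q hq ν κ hκ P hP

end PredictiveBayes
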